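/- Let s(0),...,s(k) take values in countable prefix-free sets of binary codewords with expected lengths R(i), and let y^k, S^k be arbitrary discrete random variables on a finite probability space. Then sum_{i=0}^{k} R(i) >= sum_{i=0}^{k} I(s(i); y^i | s^{i-1}, S^i), where s^{i-1} = (s(0),...,s(i-1)), y^i = (y(0),...,y(i)), S^i = (S(0),...,S(i)). -/

import Mathlib

open Finset Real

variable {Ω : Type*}

/-- Probability that the random variable `X` takes the value `x`,
under the probability mass function `p` on the finite space `Ω`. -/
noncomputable def pr [Fintype Ω] (p : Ω → ℝ) {α : Type*} [DecidableEq α]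
    (X : Ω → α) (x : α) : ℝ :=
  ∑ ω, if X ω = x then p ω else 0

/-- Shannon entropy (in bits) of a discrete random variable. -/
noncomputable def ent [Fintype Ω] (p : Ω → ℝ) {α : Type*} [DecidableEq α]
    (X : Ω → α) : ℝ :=
  -∑ x ∈ Finset.univ.image X, pr p X x * Real.logb 2 (pr p X x)

/-- Conditional entropy `H(X|Z) = H(X,Z) - H(Z)`. -/
noncomputable def condEnt [Fintype Ω] (p : Ω → ℝ) {α β : Type*}
    [DecidableEq α] [DecidableEq β] (X : Ω → α) (Z : Ω → β) : ℝ :=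
  ent p (fun ω => (X ω, Z ω)) - ent p Z

/-- Mutual information `I(X;Y) = H(X) + H(Y) - H(X,Y)`. -/
noncomputable def mi [Fintype Ω] (p : Ω → ℝ) {α β : Type*}
    [DecidableEq α] [DecidableEq β] (X : Ω → α) (Y : Ω → β) : ℝ :=
  ent p X + ent p Y - ent p (fun ω => (X ω, Y ω))

/-- Conditional mutual information `I(X;Y|Z) = H(X|Z) + H(Y|Z) - H(X,Y|Z)`. -/
noncomputable def cmi [Fintype Ω] (p : Ω → ℝ) {α β γ : Type*}
    [DecidableEq α] [DecidableEq β] [DecidableEq γ]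
    (X : Ω → α) (Y : Ω → β) (Z : Ω → γ) : ℝ :=
  condEnt p X Z + condEnt p Y Z - condEnt p (fun ω => (X ω, Y ω)) Z

/-- `X` and `Y` are conditionally independent given `Z`:
`P(X=x, Y=y | Z=z) = P(X=x|Z=z) P(Y=y|Z=z)` whenever `P(Z=z) > 0`. -/
def CondIndep [Fintype Ω] (p : Ω → ℝ) {α β γ : Type*}
    [DecidableEq α] [DecidableEq β] [DecidableEq γ]
    (X : Ω → α) (Y : Ω → β) (Z : Ω → γ) : Prop :=
  ∀ x y z, 0 < pr p Z z →
    pr p (fun ω => (X ω, Y ω, Z ω)) (x, y, z) / pr p Z z =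
      (pr p (fun ω => (X ω, Z ω)) (x, z) / pr p Z z) *
        (pr p (fun ω => (Y ω, Z ω)) (y, z) / pr p Z z)

/-- A set of binary codewords is prefix-free if no codeword is a
(proper or improper) prefix of a different codeword. -/
def PrefixFreeOn (S : Set (List Bool)) : Prop :=
  ∀ a ∈ S, ∀ b ∈ S, a <+: b → a = b

/-!
Each summand is bounded on its own: `I(s(i); y^i | C) ≤ H(s(i) | C) ≤ H(s(i)) ≤ E |s(i)|`.
The first step is `H(s(i) | y^i, C) ≥ 0`, the second is subadditivity of entropy, and the
last is Shannon's bound for prefix codes; the last two both come from Gibbs' inequality, fed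
with the product of the marginals and with the Kraft weights `2 ^ (-|w|)` respectively.
-/

section PrefixCode

open InformationTheory

variable {S : Set (List Bool)}

theorem PrefixFreeOn.uniquelyDecodable (hS : PrefixFreeOn S) (hnil : [] ∉ S) :
    UniquelyDecodable S := by
  intro L₁
  induction L₁ with
  | nil =>
    rintro (_ | ⟨b, L₂⟩) - h₂ hflat
    · rfl
    · have hb : b = [] := (List.append_eq_nil_iff.1 hflat.symm).1
      exact absurd (hb ▸ h₂ b (by simp)) hnil
  | cons a L₁ ih =>
    rintro (_ | ⟨b, L₂⟩) h₁ h₂ hflat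
    · have ha : a = [] := (List.append_eq_nil_iff.1 hflat).1
      exact absurd (ha ▸ h₁ a (by simp)) hnil
    · simp only [List.flatten_cons] at hflat
      have ha : a ∈ S := h₁ a (by simp)
      have hb : b ∈ S := h₂ b (by simp)
      have hab : a = b := by
        rcases List.prefix_or_prefix_of_prefix (List.prefix_append a _)
          (hflat ▸ List.prefix_append b _) with h | h
        · exact hS a ha b hb h
        · exact (hS b hb a ha h).symm
      subst hab
      rw [ih L₂ (fun w hw => h₁ w (by simp [hw])) (fun w hw => h₂ w (by simp [hw]))
        (List.append_cancel_left hflat)]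

theorem PrefixFreeOn.kraft {T : Finset (List Bool)} (hT : PrefixFreeOn (T : Set (List Bool))) :
    ∑ w ∈ T, ((2 : ℝ) ^ w.length)⁻¹ ≤ 1 := by
  by_cases hnil : [] ∈ T
  · -- `{[]}` is prefix-free but not uniquely decodable, so Kraft–McMillan does not apply to it
    have hT' : T ⊆ {[]} := fun b hb =>
      mem_singleton.2 (hT [] hnil b hb List.nil_prefix).symm
    calc ∑ w ∈ T, ((2 : ℝ) ^ w.length)⁻¹
        ≤ ∑ w ∈ ({[]} : Finset (List Bool)), ((2 : ℝ) ^ w.length)⁻¹ :=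
          sum_le_sum_of_subset_of_nonneg hT' fun _ _ _ => by positivity
      _ = 1 := by simp
  · simpa using kraft_mcmillan_inequality (hT.uniquelyDecodable (by simpa using hnil))

end PrefixCode

section Entropy

variable [Fintype Ω] {p : Ω → ℝ} {α γ : Type*} [DecidableEq α] [DecidableEq γ]

theorem pr_nonneg (hp : ∀ ω, 0 ≤ p ω) (X : Ω → α) (x : α) : 0 ≤ pr p X x :=
  sum_nonneg fun ω _ => by split <;> simp [hp ω]

theorem pr_le_pr_comp (hp : ∀ ω, 0 ≤ p ω) (X : Ω → α) (f : α → γ) (x : α) :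
    pr p X x ≤ pr p (fun ω => f (X ω)) (f x) :=
  sum_le_sum fun ω _ => by
    by_cases h : X ω = x
    · simp [h]
    · simp only [h, if_false]
      split <;> simp [hp ω]

theorem le_pr_apply (hp : ∀ ω, 0 ≤ p ω) (X : Ω → α) (ω : Ω) : p ω ≤ pr p X (X ω) := by
  simpa [pr] using single_le_sum (f := fun ω' => if X ω' = X ω then p ω' else 0)
    (fun ω' _ => by split <;> simp [hp ω']) (mem_univ ω)

theorem sum_image_pr_mul (X : Ω → α) (f : α → ℝ) :
    ∑ x ∈ univ.image X, pr p X x * f x = ∑ ω, p ω * f (X ω) := by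
  simp_rw [pr, sum_mul, ite_mul, zero_mul]
  rw [sum_comm]
  exact sum_congr rfl fun ω _ => by simp

theorem sum_image_pr (hp1 : ∑ ω, p ω = 1) (X : Ω → α) : ∑ x ∈ univ.image X, pr p X x = 1 := by
  simpa [hp1] using sum_image_pr_mul (p := p) X fun _ => 1

theorem ent_eq_neg_sum (X : Ω → α) : ent p X = -∑ ω, p ω * logb 2 (pr p X (X ω)) := by
  rw [ent, sum_image_pr_mul]

theorem ent_comp_le (hp : ∀ ω, 0 ≤ p ω) (X : Ω → α) (f : α → γ) :
    ent p (fun ω => f (X ω)) ≤ ent p X := by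
  rw [ent_eq_neg_sum, ent_eq_neg_sum, neg_le_neg_iff]
  refine sum_le_sum fun ω _ => ?_
  rcases (hp ω).eq_or_lt with h0 | h0
  · simp [← h0]
  · exact mul_le_mul_of_nonneg_left (logb_le_logb_of_le one_lt_two
      (h0.trans_le (le_pr_apply hp X ω)) (pr_le_pr_comp hp X f (X ω))) h0.le

/-- Gibbs' inequality, against sub-probability weights `q`. -/
theorem ent_le_neg_sum_logb (hp : ∀ ω, 0 ≤ p ω) (hp1 : ∑ ω, p ω = 1) (X : Ω → α) {q : α → ℝ}
    (hq0 : ∀ x, 0 ≤ q x) (hq : ∀ ω, 0 < p ω → 0 < q (X ω))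
    (hq1 : ∑ x ∈ univ.image X, q x ≤ 1) :
    ent p X ≤ -∑ ω, p ω * logb 2 (q (X ω)) := by
  set r : Ω → ℝ := fun ω => q (X ω) / pr p X (X ω)
  have hlog2 : 0 < log 2 := log_pos one_lt_two
  have hpoint : ∀ ω, p ω * (logb 2 (q (X ω)) - logb 2 (pr p X (X ω))) ≤
      (p ω * r ω - p ω) / log 2 := by
    intro ω
    rcases (hp ω).eq_or_lt with h0 | h0
    · simp [← h0]
    · rw [← logb_div (hq ω h0).ne' (h0.trans_le (le_pr_apply hp X ω)).ne', logb,
        ← mul_div_assoc, div_le_div_iff_of_pos_right hlog2, ← mul_sub_one]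
      exact mul_le_mul_of_nonneg_left (log_le_sub_one_of_pos
        (div_pos (hq ω h0) (h0.trans_le (le_pr_apply hp X ω)))) h0.le
  have hr : ∑ ω, p ω * r ω ≤ 1 := by
    rw [← sum_image_pr_mul X fun x => q x / pr p X x]
    refine (sum_le_sum fun x _ => ?_).trans hq1
    rcases eq_or_ne (pr p X x) 0 with h | h
    · simp [h, hq0 x]
    · rw [mul_div_cancel₀ _ h]
  refine sub_nonpos.1 <|
    calc ent p X - -∑ ω, p ω * logb 2 (q (X ω))
        = ∑ ω, p ω * (logb 2 (q (X ω)) - logb 2 (pr p X (X ω))) := by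
          simp only [ent_eq_neg_sum, mul_sub, sum_sub_distrib]
          ring
      _ ≤ ∑ ω, (p ω * r ω - p ω) / log 2 := sum_le_sum fun ω _ => hpoint ω
      _ = (∑ ω, p ω * r ω - 1) / log 2 := by rw [← sum_div, sum_sub_distrib, hp1]
      _ ≤ 0 := div_nonpos_of_nonpos_of_nonneg (by linarith) hlog2.le

theorem ent_le_sum_length (hp : ∀ ω, 0 ≤ p ω) (hp1 : ∑ ω, p ω = 1) {s : Ω → List Bool}
    (hs : PrefixFreeOn (Set.range s)) :
    ent p s ≤ ∑ ω, p ω * ((s ω).length : ℝ) := by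
  have hkraft : ∑ w ∈ univ.image s, ((2 : ℝ) ^ w.length)⁻¹ ≤ 1 :=
    PrefixFreeOn.kraft fun a ha b hb => hs a (by simpa using ha) b (by simpa using hb)
  refine (ent_le_neg_sum_logb hp hp1 s (fun _ => by positivity) (fun _ _ => by positivity)
    hkraft).trans_eq ?_
  simp [logb_inv, logb_pow]

theorem ent_pair_le_add (hp : ∀ ω, 0 ≤ p ω) (hp1 : ∑ ω, p ω = 1) (X : Ω → α) (Z : Ω → γ) :
    ent p (fun ω => (X ω, Z ω)) ≤ ent p X + ent p Z := by
  have hq : ∑ v ∈ univ.image (fun ω => (X ω, Z ω)), pr p X v.1 * pr p Z v.2 ≤ 1 :=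
    calc ∑ v ∈ univ.image (fun ω => (X ω, Z ω)), pr p X v.1 * pr p Z v.2
        ≤ ∑ v ∈ univ.image X ×ˢ univ.image Z, pr p X v.1 * pr p Z v.2 :=
          sum_le_sum_of_subset_of_nonneg (fun v hv => by
            obtain ⟨ω, -, rfl⟩ := mem_image.1 hv
            exact mem_product.2
              ⟨mem_image_of_mem X (mem_univ ω), mem_image_of_mem Z (mem_univ ω)⟩)
            fun v _ _ => mul_nonneg (pr_nonneg hp X _) (pr_nonneg hp Z _)
      _ = 1 := by rw [sum_product, ← sum_mul_sum, sum_image_pr hp1, sum_image_pr hp1, one_mul]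
  refine (ent_le_neg_sum_logb hp hp1 (fun ω => (X ω, Z ω))
    (q := fun v => pr p X v.1 * pr p Z v.2)
    (fun v => mul_nonneg (pr_nonneg hp X _) (pr_nonneg hp Z _))
    (fun ω h0 => mul_pos (h0.trans_le (le_pr_apply hp X ω)) (h0.trans_le (le_pr_apply hp Z ω)))
    hq).trans_eq ?_
  rw [ent_eq_neg_sum, ent_eq_neg_sum, ← neg_add, ← sum_add_distrib]
  refine congrArg Neg.neg (sum_congr rfl fun ω _ => ?_)
  rcases (hp ω).eq_or_lt with h0 | h0
  · simp [← h0]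
  · rw [logb_mul (h0.trans_le (le_pr_apply hp X ω)).ne' (h0.trans_le (le_pr_apply hp Z ω)).ne',
      mul_add]

theorem condEnt_le_ent (hp : ∀ ω, 0 ≤ p ω) (hp1 : ∑ ω, p ω = 1) (X : Ω → α) (Z : Ω → γ) :
    condEnt p X Z ≤ ent p X := by
  have := ent_pair_le_add hp hp1 X Z
  rw [condEnt]
  linarith

theorem cmi_le_condEnt {β : Type*} [DecidableEq β] (hp : ∀ ω, 0 ≤ p ω)
    (X : Ω → α) (Y : Ω → β) (Z : Ω → γ) : cmi p X Y Z ≤ condEnt p X Z := by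
  have := ent_comp_le hp (fun ω => ((X ω, Y ω), Z ω)) fun v => (v.1.2, v.2)
  simp only [cmi, condEnt] at this ⊢
  linarith

end Entropy

/-- First half of the corrected proof of Theorem 4.1:
`∑ R(i) ≥ ∑ I(s(i); y^i | s^{i-1}, S^i)`, the causally conditioned
directed information `I(y^k → s^k ‖ S^k)`. -/
theorem sum_rate_ge_causal_directed_info [Fintype Ω] (p : Ω → ℝ)
    (hp : ∀ ω, 0 ≤ p ω) (hp1 : ∑ ω, p ω = 1)
    {α β : Type*} [DecidableEq α] [DecidableEq β]
    (k : ℕ) (s : Fin (k + 1) → Ω → List Bool)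
    (hpf : ∀ i, PrefixFreeOn (Set.range (s i)))
    (y : Fin (k + 1) → Ω → α) (S : Fin (k + 1) → Ω → β)
    (R : Fin (k + 1) → ℝ)
    (hR : ∀ i, R i = ∑ ω, p ω * ((s i ω).length : ℝ)) :
    (∑ i : Fin (k + 1),
        cmi p (s i)
          (fun ω => fun j : Fin (i.1 + 1) =>
            y ⟨j.1, Nat.lt_of_lt_of_le j.isLt i.isLt⟩ ω)
          (fun ω =>
            ((fun j : Fin i.1 => s ⟨j.1, Nat.lt_trans j.isLt i.isLt⟩ ω),
             (fun j : Fin (i.1 + 1) =>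
               S ⟨j.1, Nat.lt_of_lt_of_le j.isLt i.isLt⟩ ω)))) ≤
      ∑ i, R i := by
  refine sum_le_sum fun i _ => ?_
  calc _ ≤ condEnt p (s i) _ := cmi_le_condEnt hp _ _ _
    _ ≤ ent p (s i) := condEnt_le_ent hp hp1 _ _
    _ ≤ ∑ ω, p ω * ((s i ω).length : ℝ) := ent_le_sum_length hp hp1 (hpf i)
    _ = R i := (hR i).symm
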